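/- A bilinear form Ω on the Lie superalgebra (C³+A) is even, supersymmetric and ad-invariant if and only if there exist β, k ∈ ℝ such that Ω(T₁,T₁) = β, Ω(T₁,T₂) = Ω(T₂,T₁) = k, Ω(T₃,T₄) = k, Ω(T₄,T₃) = −k, and all other values of Ω on basis vectors are zero. Moreover, such a form is non-degenerate if and only if k ≠ 0. -/
import Mathlib


noncomputable section

/-- The underlying supervector space `V = ℝ⁴`, with basis `T 0, T 1` even and `T 2, T 3` odd
(corresponding to `T₁, T₂; T₃, T₄`). -/
abbrev V4 : Type := Fin 4 → ℝ

/-- The basis vectors `T₁, T₂, T₃, T₄` (zero-indexed). -/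
def T (i : Fin 4) : V4 := Pi.single i 1

/-- The even subspace `span{T₁,T₂}`. -/
def spanEven : Submodule ℝ V4 := Submodule.span ℝ {T 0, T 1}

/-- The odd subspace `span{T₃,T₄}`. -/
def spanOdd : Submodule ℝ V4 := Submodule.span ℝ {T 2, T 3}

/-- The bracket of the Lie superalgebra `(C³+A)`: `[T₁,T₄] = T₃`, `[T₄,T₁] = −T₃`, `[T₄,T₄] = T₂`, all other brackets of basis vectors zero. -/
def br (x y : V4) : V4 := ![0, x 3 * y 3, x 0 * y 3 - x 3 * y 0, 0]

/-- A bilinear form is even: it vanishes whenever exactly one argument lies in the even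
subspace and the other in the odd subspace. -/
def IsEvenForm (Ω : V4 →ₗ[ℝ] V4 →ₗ[ℝ] ℝ) : Prop :=
  (∀ x ∈ spanEven, ∀ y ∈ spanOdd, Ω x y = 0) ∧
  (∀ x ∈ spanOdd, ∀ y ∈ spanEven, Ω x y = 0)

/-- A bilinear form is supersymmetric: symmetric on the even subspace and antisymmetric on
the odd subspace. -/
def IsSuperSym (Ω : V4 →ₗ[ℝ] V4 →ₗ[ℝ] ℝ) : Prop :=
  (∀ x ∈ spanEven, ∀ y ∈ spanEven, Ω x y = Ω y x) ∧
  (∀ x ∈ spanOdd, ∀ y ∈ spanOdd, Ω x y = -Ω y x)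

/-- Ad-invariance of a bilinear form with respect to the bracket of `(C³+A)`:
`Ω([x,y],z) = Ω(x,[y,z])` for all `x, y, z`. -/
def IsAdInv (Ω : V4 →ₗ[ℝ] V4 →ₗ[ℝ] ℝ) : Prop :=
  ∀ x y z : V4, Ω (br x y) z = Ω x (br y z)

/-- The matrix of values of the claimed general ad-invariant supersymmetric form:
`Ω(T₁,T₁) = β`, `Ω(T₁,T₂) = Ω(T₂,T₁) = k`, `Ω(T₃,T₄) = k`, `Ω(T₄,T₃) = −k`, all other
values on basis vectors zero. -/
def OmegaMat (β k : ℝ) : Matrix (Fin 4) (Fin 4) ℝ :=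
  !![β, k, 0, 0; k, 0, 0, 0; 0, 0, 0, k; 0, 0, -k, 0]

lemma repr4 (x : V4) : x = ∑ a : Fin 4, x a • T a := by
  funext j
  simp [T, Finset.sum_apply, Pi.single_apply]

lemma expand4 (Ω : V4 →ₗ[ℝ] V4 →ₗ[ℝ] ℝ) (x y : V4) :
    Ω x y = ∑ a : Fin 4, ∑ b : Fin 4, x a * y b * Ω (T a) (T b) := by
  conv_lhs => rw [repr4 x, repr4 y]
  simp [Finset.mul_sum, mul_assoc]
  rw [Finset.sum_comm]
  exact Finset.sum_congr rfl fun a _ => Finset.sum_congr rfl fun b _ => by ring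

lemma br_eq (x y : V4) :
    br x y = (x 3 * y 3) • T 1 + (x 0 * y 3 - x 3 * y 0) • T 2 := by
  funext j
  fin_cases j <;> simp [br, T, Pi.single_apply]

lemma fin4_mk2 (h : 2 < 4) : (⟨2, h⟩ : Fin 4) = 2 := rfl
lemma fin4_mk3 (h : 3 < 4) : (⟨3, h⟩ : Fin 4) = 3 := rfl

lemma mem_even0 : T 0 ∈ spanEven := Submodule.subset_span (by left; rfl)
lemma mem_even1 : T 1 ∈ spanEven := Submodule.subset_span (by right; rfl)
lemma mem_odd2 : T 2 ∈ spanOdd := Submodule.subset_span (by left; rfl)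
lemma mem_odd3 : T 3 ∈ spanOdd := Submodule.subset_span (by right; rfl)

lemma T_ne_zero (i : Fin 4) : T i ≠ 0 := by
  intro h
  have := congrFun h i
  simp [T] at this

/-- A bilinear form `Ω` on the Lie superalgebra `(C³+A)` is even, supersymmetric and ad-invariant
if and only if there exist `β, k ∈ ℝ` with `Ω(T₁,T₁) = β`, `Ω(T₁,T₂) = Ω(T₂,T₁) = k`,
`Ω(T₃,T₄) = k`, `Ω(T₄,T₃) = −k`, and all other values on basis vectors zero. Moreover, such
a form is non-degenerate if and only if `k ≠ 0`. -/
theorem adInvariant_metric_C3A (Ω : V4 →ₗ[ℝ] V4 →ₗ[ℝ] ℝ) :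
    ((IsEvenForm Ω ∧ IsSuperSym Ω ∧ IsAdInv Ω) ↔
      ∃ β k : ℝ, ∀ a b : Fin 4, Ω (T a) (T b) = OmegaMat β k a b) ∧
    (∀ β k : ℝ, (∀ a b : Fin 4, Ω (T a) (T b) = OmegaMat β k a b) →
      ((∀ x : V4, (∀ y : V4, Ω x y = 0) → x = 0) ↔ k ≠ 0)) := by
  constructor
  · constructor
    · rintro ⟨⟨he1, he2⟩, ⟨hs1, hs2⟩, hinv⟩
      refine ⟨Ω (T 0) (T 0), Ω (T 0) (T 1), ?_⟩
      have h33 : br (T 3) (T 3) = T 1 := by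
        funext j; fin_cases j <;> simp [br, T, Pi.single_apply]
      have h31 : br (T 3) (T 1) = (0 : V4) := by
        funext j; fin_cases j <;> simp [br, T, Pi.single_apply]
      have h03 : br (T 0) (T 3) = T 2 := by
        funext j; fin_cases j <;> simp [br, T, Pi.single_apply]
      have h11 : Ω (T 1) (T 1) = 0 := by
        have := hinv (T 3) (T 3) (T 1)
        rw [h33, h31] at this
        simpa using this
      have h23 : Ω (T 2) (T 3) = Ω (T 0) (T 1) := by
        have := hinv (T 0) (T 3) (T 3)
        rw [h03, h33] at this
        exact this
      have h22 : Ω (T 2) (T 2) = 0 := by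
        have := hs2 (T 2) mem_odd2 (T 2) mem_odd2; linarith
      have h33' : Ω (T 3) (T 3) = 0 := by
        have := hs2 (T 3) mem_odd3 (T 3) mem_odd3; linarith
      have v02 : Ω (T 0) (T 2) = 0 := he1 _ mem_even0 _ mem_odd2
      have v03 : Ω (T 0) (T 3) = 0 := he1 _ mem_even0 _ mem_odd3
      have v12 : Ω (T 1) (T 2) = 0 := he1 _ mem_even1 _ mem_odd2
      have v13 : Ω (T 1) (T 3) = 0 := he1 _ mem_even1 _ mem_odd3
      have v20 : Ω (T 2) (T 0) = 0 := he2 _ mem_odd2 _ mem_even0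
      have v21 : Ω (T 2) (T 1) = 0 := he2 _ mem_odd2 _ mem_even1
      have v30 : Ω (T 3) (T 0) = 0 := he2 _ mem_odd3 _ mem_even0
      have v31 : Ω (T 3) (T 1) = 0 := he2 _ mem_odd3 _ mem_even1
      have h10 : Ω (T 1) (T 0) = Ω (T 0) (T 1) := hs1 _ mem_even1 _ mem_even0
      have h32 : Ω (T 3) (T 2) = -Ω (T 0) (T 1) := by
        rw [hs2 _ mem_odd3 _ mem_odd2, h23]
      intro a b
      fin_cases a <;> fin_cases b <;>
        simp [OmegaMat, fin4_mk2, fin4_mk3, v02, v03, v12, v13, v20, v21, v30, v31,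
          h10, h11, h22, h23, h32, h33', Matrix.vecHead, Matrix.vecTail]
    · rintro ⟨β, k, hv⟩
      have key : ∀ x y : V4,
          Ω x y = x 0 * y 0 * β + x 0 * y 1 * k + x 1 * y 0 * k
            + x 2 * y 3 * k - x 3 * y 2 * k := by
        intro x y
        rw [expand4 Ω x y]
        simp only [Fin.sum_univ_four, hv, OmegaMat, Matrix.cons_val', Matrix.cons_val_zero,
          Matrix.cons_val_one, Matrix.head_cons, Matrix.empty_val', Matrix.cons_val_fin_one,
          Matrix.head_fin_const, Matrix.cons_val_two, Matrix.tail_cons, Matrix.cons_val_three,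
          Matrix.of_apply]
        ring
      have hevenc : ∀ x ∈ spanEven, x 2 = 0 ∧ x 3 = 0 := by
        intro x hx
        rw [spanEven, Submodule.mem_span_pair] at hx
        obtain ⟨c, d, rfl⟩ := hx
        constructor <;> simp [T, Pi.single_apply]
      have hoddc : ∀ x ∈ spanOdd, x 0 = 0 ∧ x 1 = 0 := by
        intro x hx
        rw [spanOdd, Submodule.mem_span_pair] at hx
        obtain ⟨c, d, rfl⟩ := hx
        constructor <;> simp [T, Pi.single_apply]
      refine ⟨⟨?_, ?_⟩, ⟨?_, ?_⟩, ?_⟩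
      · intro x hx y hy
        obtain ⟨hx2, hx3⟩ := hevenc x hx
        obtain ⟨hy0, hy1⟩ := hoddc y hy
        rw [key]; rw [hx2, hx3, hy0, hy1]; ring
      · intro x hx y hy
        obtain ⟨hx0, hx1⟩ := hoddc x hx
        obtain ⟨hy2, hy3⟩ := hevenc y hy
        rw [key]; rw [hx0, hx1, hy2, hy3]; ring
      · intro x hx y hy
        obtain ⟨hx2, hx3⟩ := hevenc x hx
        obtain ⟨hy2, hy3⟩ := hevenc y hy
        rw [key, key]; rw [hx2, hx3, hy2, hy3]; ring
      · intro x hx y hy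
        obtain ⟨hx0, hx1⟩ := hoddc x hx
        obtain ⟨hy0, hy1⟩ := hoddc y hy
        rw [key, key]; rw [hx0, hx1, hy0, hy1]; ring
      · intro x y z
        rw [key, key]
        simp only [br, Matrix.cons_val_zero, Matrix.cons_val_one, Matrix.head_cons,
          Matrix.cons_val_two, Matrix.tail_cons, Matrix.cons_val_three]
        ring
  · intro β k hv
    have key : ∀ x y : V4,
        Ω x y = x 0 * y 0 * β + x 0 * y 1 * k + x 1 * y 0 * k
          + x 2 * y 3 * k - x 3 * y 2 * k := by
      intro x y
      rw [expand4 Ω x y]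
      simp only [Fin.sum_univ_four, hv, OmegaMat, Matrix.cons_val', Matrix.cons_val_zero,
        Matrix.cons_val_one, Matrix.head_cons, Matrix.empty_val', Matrix.cons_val_fin_one,
        Matrix.head_fin_const, Matrix.cons_val_two, Matrix.tail_cons, Matrix.cons_val_three,
        Matrix.of_apply]
      ring
    constructor
    · intro hnd hk
      have : T 1 = 0 := by
        apply hnd
        intro y
        rw [key]
        simp [T, Pi.single_apply, hk]
      exact T_ne_zero 1 this
    · intro hk x hx
      have e0 := hx (T 1); rw [key] at e0; simp [T, Pi.single_apply] at e0
      have e1 := hx (T 0); rw [key] at e1; simp [T, Pi.single_apply] at e1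
      have e2 := hx (T 3); rw [key] at e2; simp [T, Pi.single_apply] at e2
      have e3 := hx (T 2); rw [key] at e3; simp [T, Pi.single_apply] at e3
      have hx0 : x 0 = 0 := e0.resolve_right hk
      have hx2 : x 2 = 0 := e2.resolve_right hk
      have hx3 : x 3 = 0 := e3.resolve_right hk
      have hx1 : x 1 = 0 := by
        rw [hx0] at e1
        have h1 : x 1 * k = 0 := by linarith
        exact (mul_eq_zero.mp h1).resolve_right hk
      funext j
      fin_cases j <;> simp [hx0, hx1, hx2, hx3]
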